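/- arXiv:0909.1148 — 3 statements merged into one kernel-verified Lean document; each statement's English description precedes it below -/
import Mathlib

section
/- A coherent lower prevision P^N on L(X^N) is exchangeable if and only if every linear prevision dominating it is exchangeable; that is, P^N(πf − f) ≥ 0 for all gambles f and permutations π holds if and only if every linear prevision P with P ≥ P^N pointwise satisfies P(πf) = P(f) for all gambles f and permutations π. -/
/-!
A linear prevision above an exchangeable `P` satisfies `Q (πf) - Q f = Q (πf - f) ≥ P (πf - f) ≥ 0`,
and applying this to `π⁻¹` gives equality. Conversely, by Hahn–Banach every coherent lower
prevision is the lower envelope of its dominating linear previsions, and the one attaining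
`P (πf - f)` is exchangeable, so that value is `0`.
-/

section Superlinear

variable {E : Type*} [AddCommGroup E] [Module ℝ E] {P : E → ℝ}

theorem map_zero_of_smul_eq (hsmul : ∀ x, ∀ c : ℝ, 0 ≤ c → P (c • x) = c * P x) : P 0 = 0 := by
  simpa using hsmul 0 0 le_rfl

theorem add_map_neg_nonpos (hsmul : ∀ x, ∀ c : ℝ, 0 ≤ c → P (c • x) = c * P x)
    (hadd : ∀ x y, P x + P y ≤ P (x + y)) (x : E) : P x + P (-x) ≤ 0 := by
  simpa [map_zero_of_smul_eq hsmul] using hadd x (-x)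

/-- Extend `c • g ↦ c * P g` from the line through `g` below the sublinear `x ↦ -P (-x)`. -/
theorem exists_linearMap_ge_eq (hsmul : ∀ x, ∀ c : ℝ, 0 ≤ c → P (c • x) = c * P x)
    (hadd : ∀ x y, P x + P y ≤ P (x + y)) (g : E) :
    ∃ Q : E →ₗ[ℝ] ℝ, (∀ x, P x ≤ Q x) ∧ Q g = P g := by
  have hP0 := map_zero_of_smul_eq hsmul
  let Q₀ : E →ₗ.[ℝ] ℝ := LinearPMap.mkSpanSingleton' g (P g) fun c hc => by
    rcases smul_eq_zero.mp hc with rfl | rfl <;> simp [hP0]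
  have hQ₀_le : ∀ x : Q₀.domain, Q₀ x ≤ -P (-x) := by
    rintro ⟨x, hx⟩
    obtain ⟨c, rfl⟩ := Submodule.mem_span_singleton.mp hx
    rw [LinearPMap.mkSpanSingleton'_apply]
    rcases le_total 0 c with hc | hc
    · rw [← smul_neg, hsmul _ c hc]
      simp only [RingHom.id_apply, smul_eq_mul]
      nlinarith [add_map_neg_nonpos hsmul hadd g]
    · rw [← neg_smul, hsmul _ (-c) (neg_nonneg.mpr hc)]
      simp
  obtain ⟨Q, hQ_ext, hQ_le⟩ := exists_extension_of_le_sublinear Q₀ (fun x => -P (-x))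
    (fun c hc x => by simp only [← smul_neg, hsmul _ c hc.le, mul_neg])
    (fun x y => by rw [neg_add]; linarith [hadd (-x) (-y)])
    hQ₀_le
  refine ⟨Q, fun x => ?_, ?_⟩
  · simpa using hQ_le (-x)
  · rw [hQ_ext ⟨g, Submodule.mem_span_singleton_self g⟩]
    exact LinearPMap.mkSpanSingleton'_apply_self _ _ _ _

end Superlinear

section Gambles

variable {Ω : Type*} [Nonempty Ω] {Q : (Ω → ℝ) →ₗ[ℝ] ℝ}

theorem nonneg_of_iInf_le (hQ : ∀ f, (⨅ z, f z) ≤ Q f) {f : Ω → ℝ} (hf : ∀ z, 0 ≤ f z) :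
    0 ≤ Q f :=
  (le_ciInf hf).trans (hQ f)

theorem map_one_of_iInf_le (hQ : ∀ f, (⨅ z, f z) ≤ Q f) : Q (fun _ => 1) = 1 := by
  have hge : 1 ≤ Q (fun _ => 1) := by simpa using hQ (fun _ => 1)
  have hle : -1 ≤ Q (-fun _ => 1) := hQ (-fun _ => 1) |>.trans_eq' (by simp)
  rw [map_neg] at hle
  linarith

end Gambles

theorem map_comp_perm_eq_of_le {ι X : Type*} (Q : ((ι → X) → ℝ) →ₗ[ℝ] ℝ)
    (hQ : ∀ (f : (ι → X) → ℝ) (π : Equiv.Perm ι), Q f ≤ Q (fun z => f (z ∘ π)))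
    (f : (ι → X) → ℝ) (π : Equiv.Perm ι) : Q (fun z => f (z ∘ π)) = Q f := by
  refine le_antisymm ?_ (hQ f π)
  simpa [Function.comp_assoc] using hQ (fun z => f (z ∘ π)) π⁻¹

theorem exchangeable_iff_dominating_linear_previsions_exchangeable_general
    {X : Type*} [Nonempty X] {N : ℕ}
    (P : ((Fin N → X) → ℝ) → ℝ)
    (h1 : ∀ f : (Fin N → X) → ℝ, (⨅ z, f z) ≤ P f)
    (h2 : ∀ f : (Fin N → X) → ℝ, ∀ c : ℝ, 0 ≤ c → P (c • f) = c * P f)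
    (h3 : ∀ f g : (Fin N → X) → ℝ, P f + P g ≤ P (f + g)) :
    (∀ (f : (Fin N → X) → ℝ) (π : Equiv.Perm (Fin N)),
        0 ≤ P (fun z => f (z ∘ π) - f z)) ↔
    (∀ Q : ((Fin N → X) → ℝ) →ₗ[ℝ] ℝ,
        (∀ f : (Fin N → X) → ℝ, (∀ z, 0 ≤ f z) → 0 ≤ Q f) →
        Q (fun _ => 1) = 1 →
        (∀ f : (Fin N → X) → ℝ, P f ≤ Q f) →
        ∀ (f : (Fin N → X) → ℝ) (π : Equiv.Perm (Fin N)),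
          Q (fun z => f (z ∘ π)) = Q f) := by
  constructor
  · intro hP Q _ _ hPQ
    refine map_comp_perm_eq_of_le Q fun f π => sub_nonneg.mp ?_
    rw [← map_sub]
    exact (hP f π).trans (hPQ _)
  · intro hQ f π
    obtain ⟨Q, hPQ, hQg⟩ := exists_linearMap_ge_eq h2 h3 (fun z => f (z ∘ π) - f z)
    have hQ_inf : ∀ g, (⨅ z, g z) ≤ Q g := fun g => (h1 g).trans (hPQ g)
    have hQπ := hQ Q (fun _ => nonneg_of_iInf_le hQ_inf) (map_one_of_iInf_le hQ_inf) hPQ f π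
    rw [← hQg, show Q (fun z => f (z ∘ π) - f z) = _ - _ from map_sub Q _ f, hQπ, sub_self]

/-- A coherent lower prevision on `L(X^N)` is exchangeable if and only if every
dominating linear prevision is exchangeable. -/
theorem exchangeable_iff_dominating_linear_previsions_exchangeable
    {X : Type*} [Fintype X] [Nonempty X] {N : ℕ} (hN : 1 ≤ N)
    (P : ((Fin N → X) → ℝ) → ℝ)
    (h1 : ∀ f : (Fin N → X) → ℝ, (⨅ z, f z) ≤ P f)
    (h2 : ∀ f : (Fin N → X) → ℝ, ∀ c : ℝ, 0 ≤ c → P (c • f) = c * P f)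
    (h3 : ∀ f g : (Fin N → X) → ℝ, P f + P g ≤ P (f + g)) :
    (∀ (f : (Fin N → X) → ℝ) (π : Equiv.Perm (Fin N)),
        0 ≤ P (fun z => f (z ∘ π) - f z)) ↔
    (∀ Q : ((Fin N → X) → ℝ) →ₗ[ℝ] ℝ,
        (∀ f : (Fin N → X) → ℝ, (∀ z, 0 ≤ f z) → 0 ≤ Q f) →
        Q (fun _ => 1) = 1 →
        (∀ f : (Fin N → X) → ℝ, P f ≤ Q f) →
        ∀ (f : (Fin N → X) → ℝ) (π : Equiv.Perm (Fin N)),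
          Q (fun z => f (z ∘ π)) = Q f) :=
  exchangeable_iff_dominating_linear_previsions_exchangeable_general P h1 h2 h3
end

section
/- A coherent lower prevision P^N on L(X^N) is exchangeable if and only if there is a coherent lower prevision Q on L(N^N) such that P^N(f) = Q(MuHy^N(f|·)) for all gambles f on X^N; moreover, in that case Q is necessarily given by Q(h) = P^N(h ∘ T^N). -/
/-!
`MuHy^N(f | T^N z)` is the average of `f (z ∘ π)` over all permutations `π`, so
`MuHy^N(f | T^N ·) - f` is a nonnegative multiple of a sum of gambles `πf - f`. For an exchangeable
coherent `P` both this difference and its negative have nonnegative lower prevision, whence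
`P f = P (MuHy^N(f | ·) ∘ T^N)`, and `Q h := P (h ∘ T^N)` is coherent because `T^N` is onto `𝒩^N`.
Conversely `MuHy^N(πf - f | m) = 0`, so any `P = Q ∘ MuHy^N` is exchangeable; and
`MuHy^N(h ∘ T^N | ·) = h` pins `Q` down.
-/

/-- The counting map: `countVec z x` is the number of indices `k` with `z k = x`. -/
def countVec {X : Type*} [DecidableEq X] {N : ℕ} (z : Fin N → X) : X → ℕ :=
  fun x => (Finset.univ.filter fun k => z k = x).card

lemma sum_countVec {X : Type*} [Fintype X] [DecidableEq X] {N : ℕ} (z : Fin N → X) :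
    ∑ x, countVec z x = N := by
  classical
  have h := Finset.card_eq_sum_card_fiberwise
    (s := (Finset.univ : Finset (Fin N))) (t := (Finset.univ : Finset X)) (f := z)
    (fun k _ => Finset.mem_univ _)
  simpa [countVec] using h.symm

/-- The multiple hypergeometric linear prevision: the uniform average of the gamble `f`
over the invariant atom `[m] = {z : T^N(z) = m}`. -/
noncomputable def MuHy {X : Type*} [Fintype X] [DecidableEq X] {N : ℕ}
    (f : (Fin N → X) → ℝ) (m : X → ℕ) : ℝ :=
  (∑ z ∈ Finset.univ.filter fun z : Fin N → X => countVec z = m, f z)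
    / (Finset.univ.filter fun z : Fin N → X => countVec z = m).card

section Counting

variable {X : Type*} [DecidableEq X] {N : ℕ}

lemma countVec_comp_perm (z : Fin N → X) (π : Equiv.Perm (Fin N)) :
    countVec (z ∘ π) = countVec z := by
  funext x
  exact Finset.card_equiv π (by simp)

lemma exists_perm_comp_eq_of_countVec_eq {z w : Fin N → X} (h : countVec w = countVec z) :
    ∃ π : Equiv.Perm (Fin N), z ∘ π = w := by
  have hcard (x : X) :
      Fintype.card {k // w k = x} = Fintype.card {k // z k = x} := by
    simpa [countVec, Fintype.card_subtype] using congrFun h x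
  let e (x : X) : {k // w k = x} ≃ {k // z k = x} := Fintype.equivOfCardEq (hcard x)
  refine ⟨(Equiv.sigmaFiberEquiv w).symm.trans
    ((Equiv.sigmaCongrRight e).trans (Equiv.sigmaFiberEquiv z)), funext fun k => ?_⟩
  exact (e (w k) ⟨k, rfl⟩).2

lemma sum_perm_comp_eq_of_countVec_eq (f : (Fin N → X) → ℝ) {z w : Fin N → X}
    (h : countVec w = countVec z) :
    ∑ π : Equiv.Perm (Fin N), f (w ∘ π) = ∑ π : Equiv.Perm (Fin N), f (z ∘ π) := by
  obtain ⟨π₀, rfl⟩ := exists_perm_comp_eq_of_countVec_eq h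
  exact Equiv.sum_comp (Equiv.mulLeft π₀) fun π => f (z ∘ π)

variable [Fintype X]

/-- The counting map `T^N`, with values in `𝒩^N`. -/
def toCountVector (z : Fin N → X) : {m : X → ℕ // ∑ x, m x = N} :=
  ⟨countVec z, sum_countVec z⟩

lemma surjective_toCountVector :
    Function.Surjective (toCountVector : (Fin N → X) → {m : X → ℕ // ∑ x, m x = N}) := by
  rintro ⟨m, hm⟩
  have hc : Fintype.card (Σ x, Fin (m x)) = Fintype.card (Fin N) := by
    simp [Fintype.card_sigma, hm]
  let e : (Σ x, Fin (m x)) ≃ Fin N := Fintype.equivOfCardEq hc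
  refine ⟨fun k => (e.symm k).1, Subtype.ext (funext fun x => ?_)⟩
  have fiber : {p : Σ y, Fin (m y) // p.1 = x} ≃ Fin (m x) :=
    { toFun := fun p => p.2 ▸ p.1.2
      invFun := fun b => ⟨⟨x, b⟩, rfl⟩
      left_inv := by rintro ⟨⟨y, b⟩, rfl⟩; rfl
      right_inv := fun _ => rfl }
  change (Finset.univ.filter fun k => (e.symm k).1 = x).card = m x
  rw [← Fintype.card_subtype, ← Fintype.card_fin (m x)]
  exact Fintype.card_congr ((e.symm.subtypeEquiv fun _ => Iff.rfl).trans fiber)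

end Counting

section MultipleHypergeometric

variable {X : Type*} [Fintype X] [DecidableEq X] {N : ℕ}

lemma sum_filter_countVec_comp_perm (f : (Fin N → X) → ℝ) (m : X → ℕ)
    (π : Equiv.Perm (Fin N)) :
    ∑ z ∈ Finset.univ.filter (fun z => countVec z = m), f (z ∘ π)
      = ∑ z ∈ Finset.univ.filter (fun z => countVec z = m), f z :=
  Finset.sum_equiv (π.symm.arrowCongr (Equiv.refl X))
    (fun z => by
      simp only [Finset.mem_filter, Finset.mem_univ, true_and]
      change countVec z = m ↔ countVec (z ∘ π) = m
      rw [countVec_comp_perm])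
    (fun _ _ => rfl)

lemma MuHy_comp_perm_sub_self (f : (Fin N → X) → ℝ) (π : Equiv.Perm (Fin N)) (m : X → ℕ) :
    MuHy (fun z => f (z ∘ π) - f z) m = 0 := by
  rw [MuHy, Finset.sum_sub_distrib, sum_filter_countVec_comp_perm, sub_self, zero_div]

lemma MuHy_comp_toCountVector (h : {m : X → ℕ // ∑ x, m x = N} → ℝ)
    (m : {m : X → ℕ // ∑ x, m x = N}) :
    MuHy (h ∘ toCountVector) m.1 = h m := by
  obtain ⟨z₀, rfl⟩ := surjective_toCountVector m
  change MuHy _ (countVec z₀) = _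
  have hconst : ∀ z ∈ Finset.univ.filter (fun z => countVec z = countVec z₀),
      (h ∘ toCountVector) z = h (toCountVector z₀) := fun z hz =>
    congrArg h (Subtype.ext (Finset.mem_filter.mp hz).2)
  have hne : ((Finset.univ.filter fun z => countVec z = countVec z₀).card : ℝ) ≠ 0 :=
    Nat.cast_ne_zero.mpr (Finset.card_ne_zero_of_mem (by simp : z₀ ∈ _))
  rw [MuHy, Finset.sum_congr rfl hconst, Finset.sum_const, nsmul_eq_mul,
    mul_div_cancel_left₀ _ hne]

/-- Double counting the pairs `(w, π)` with `w ∈ [T z]` shows that the hypergeometric average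
is the average over all permutations of `z`. -/
lemma MuHy_countVec_eq_sum_perm (f : (Fin N → X) → ℝ) (z : Fin N → X) :
    MuHy f (countVec z) = (∑ π : Equiv.Perm (Fin N), f (z ∘ π)) / N.factorial := by
  set A := Finset.univ.filter fun w : Fin N → X => countVec w = countVec z
  have hA : (A.card : ℝ) ≠ 0 :=
    Nat.cast_ne_zero.mpr (Finset.card_ne_zero_of_mem (by simp [A] : z ∈ A))
  have double :
      (A.card : ℝ) * ∑ π : Equiv.Perm (Fin N), f (z ∘ π) = N.factorial * ∑ w ∈ A, f w := by
    calc (A.card : ℝ) * ∑ π : Equiv.Perm (Fin N), f (z ∘ π)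
        = ∑ w ∈ A, ∑ π : Equiv.Perm (Fin N), f (w ∘ π) := by
          rw [← nsmul_eq_mul, ← Finset.sum_const]
          exact Finset.sum_congr rfl fun w hw =>
            (sum_perm_comp_eq_of_countVec_eq f (Finset.mem_filter.mp hw).2).symm
      _ = ∑ _π : Equiv.Perm (Fin N), ∑ w ∈ A, f w := by
          rw [Finset.sum_comm]
          exact Finset.sum_congr rfl fun π _ => sum_filter_countVec_comp_perm f _ π
      _ = N.factorial * ∑ w ∈ A, f w := by
          rw [Finset.sum_const, Finset.card_univ, Fintype.card_perm, Fintype.card_fin,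
            nsmul_eq_mul]
  rw [MuHy, div_eq_div_iff hA (by positivity)]
  linarith

lemma MuHy_countVec_sub_self (f : (Fin N → X) → ℝ) :
    (fun z => MuHy f (countVec z) - f z)
      = (N.factorial : ℝ)⁻¹ • ∑ π : Equiv.Perm (Fin N), fun z => f (z ∘ π) - f z := by
  funext z
  simp only [MuHy_countVec_eq_sum_perm, Pi.smul_apply, Finset.sum_apply, smul_eq_mul,
    Finset.sum_sub_distrib, Finset.sum_const, Finset.card_univ, Fintype.card_perm,
    Fintype.card_fin, nsmul_eq_mul]
  field_simp

lemma sub_MuHy_countVec (f : (Fin N → X) → ℝ) :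
    (fun z => f z - MuHy f (countVec z))
      = (N.factorial : ℝ)⁻¹ • ∑ π : Equiv.Perm (Fin N), fun z => f z - f (z ∘ π) := by
  funext z
  simp only [MuHy_countVec_eq_sum_perm, Pi.smul_apply, Finset.sum_apply, smul_eq_mul,
    Finset.sum_sub_distrib, Finset.sum_const, Finset.card_univ, Fintype.card_perm,
    Fintype.card_fin, nsmul_eq_mul]
  field_simp

end MultipleHypergeometric

structure IsCoherentLowerPrevision {α : Type*} (P : (α → ℝ) → ℝ) : Prop where
  iInf_le : ∀ f, (⨅ a, f a) ≤ P f
  smul : ∀ f, ∀ c : ℝ, 0 ≤ c → P (c • f) = c * P f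
  add_le : ∀ f g, P f + P g ≤ P (f + g)

namespace IsCoherentLowerPrevision

variable {α β : Type*} {P : (α → ℝ) → ℝ}

lemma map_zero (hP : IsCoherentLowerPrevision P) : P 0 = 0 := by
  simpa using hP.smul 0 0 le_rfl

lemma sum_le (hP : IsCoherentLowerPrevision P) {ι : Type*} (s : Finset ι) (F : ι → α → ℝ) :
    ∑ i ∈ s, P (F i) ≤ P (∑ i ∈ s, F i) := by
  classical
  induction s using Finset.induction_on with
  | empty => simp [hP.map_zero]
  | insert a s ha ih =>
    rw [Finset.sum_insert ha, Finset.sum_insert ha]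
    linarith [hP.add_le (F a) (∑ i ∈ s, F i)]

lemma smul_sum_nonneg (hP : IsCoherentLowerPrevision P) {ι : Type*} (s : Finset ι)
    (F : ι → α → ℝ) (hF : ∀ i ∈ s, 0 ≤ P (F i)) {c : ℝ} (hc : 0 ≤ c) :
    0 ≤ P (c • ∑ i ∈ s, F i) := by
  rw [hP.smul _ c hc]
  exact mul_nonneg hc ((Finset.sum_nonneg hF).trans (hP.sum_le s F))

lemma eq_of_sub_nonneg (hP : IsCoherentLowerPrevision P) {f g : α → ℝ}
    (hfg : 0 ≤ P (fun a => f a - g a)) (hgf : 0 ≤ P (fun a => g a - f a)) : P f = P g := by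
  have hf := hP.add_le g (fun a => f a - g a)
  have hg := hP.add_le f (fun a => g a - f a)
  rw [show (g + fun a => f a - g a) = f from funext fun a => add_sub_cancel (g a) (f a)] at hf
  rw [show (f + fun a => g a - f a) = g from funext fun a => add_sub_cancel (f a) (g a)] at hg
  linarith

lemma comp_of_surjective (hP : IsCoherentLowerPrevision P) {φ : α → β}
    (hφ : Function.Surjective φ) : IsCoherentLowerPrevision fun h : β → ℝ => P (h ∘ φ) where
  iInf_le h := (hφ.iInf_comp h).symm.le.trans (hP.iInf_le (h ∘ φ))
  smul h c hc := hP.smul (h ∘ φ) c hc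
  add_le h g := hP.add_le (h ∘ φ) (g ∘ φ)

end IsCoherentLowerPrevision

def IsExchangeable {X : Type*} {N : ℕ} (P : ((Fin N → X) → ℝ) → ℝ) : Prop :=
  ∀ (f : (Fin N → X) → ℝ) (π : Equiv.Perm (Fin N)), 0 ≤ P (fun z => f (z ∘ π) - f z)

namespace IsExchangeable

variable {X : Type*} {N : ℕ} {P : ((Fin N → X) → ℝ) → ℝ}

lemma nonneg_sub_comp (hex : IsExchangeable P) (f : (Fin N → X) → ℝ)
    (π : Equiv.Perm (Fin N)) : 0 ≤ P (fun z => f z - f (z ∘ π)) := by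
  simpa [Function.comp_assoc] using hex (fun z => f (z ∘ π)) π.symm

variable [Fintype X] [DecidableEq X]

lemma apply_MuHy_countVec (hex : IsExchangeable P) (hP : IsCoherentLowerPrevision P)
    (f : (Fin N → X) → ℝ) : P (fun z => MuHy f (countVec z)) = P f := by
  refine hP.eq_of_sub_nonneg ?_ ?_
  · rw [MuHy_countVec_sub_self]
    exact hP.smul_sum_nonneg _ _ (fun π _ => hex f π) (by positivity)
  · rw [sub_MuHy_countVec]
    exact hP.smul_sum_nonneg _ _ (fun π _ => hex.nonneg_sub_comp f π) (by positivity)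

end IsExchangeable

theorem finite_representation_theorem_general
    {X : Type*} [Fintype X] [DecidableEq X] {N : ℕ}
    (P : ((Fin N → X) → ℝ) → ℝ)
    (h1 : ∀ f : (Fin N → X) → ℝ, (⨅ z, f z) ≤ P f)
    (h2 : ∀ f : (Fin N → X) → ℝ, ∀ c : ℝ, 0 ≤ c → P (c • f) = c * P f)
    (h3 : ∀ f g : (Fin N → X) → ℝ, P f + P g ≤ P (f + g)) :
    ((∀ (f : (Fin N → X) → ℝ) (π : Equiv.Perm (Fin N)),
        0 ≤ P (fun z => f (z ∘ π) - f z)) ↔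
      (∃ Q : ({m : X → ℕ // ∑ x, m x = N} → ℝ) → ℝ,
        ((∀ h : {m : X → ℕ // ∑ x, m x = N} → ℝ, (⨅ m, h m) ≤ Q h) ∧
         (∀ h : {m : X → ℕ // ∑ x, m x = N} → ℝ, ∀ c : ℝ, 0 ≤ c → Q (c • h) = c * Q h) ∧
         (∀ h g : {m : X → ℕ // ∑ x, m x = N} → ℝ, Q h + Q g ≤ Q (h + g))) ∧
        (∀ f : (Fin N → X) → ℝ, P f = Q (fun m => MuHy f m.val)))) ∧
    (∀ Q : ({m : X → ℕ // ∑ x, m x = N} → ℝ) → ℝ,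
      ((∀ h : {m : X → ℕ // ∑ x, m x = N} → ℝ, (⨅ m, h m) ≤ Q h) ∧
       (∀ h : {m : X → ℕ // ∑ x, m x = N} → ℝ, ∀ c : ℝ, 0 ≤ c → Q (c • h) = c * Q h) ∧
       (∀ h g : {m : X → ℕ // ∑ x, m x = N} → ℝ, Q h + Q g ≤ Q (h + g))) →
      (∀ f : (Fin N → X) → ℝ, P f = Q (fun m => MuHy f m.val)) →
      ∀ h : {m : X → ℕ // ∑ x, m x = N} → ℝ,
        Q h = P (fun z => h ⟨countVec z, sum_countVec z⟩)) := by
  have hP : IsCoherentLowerPrevision P := ⟨h1, h2, h3⟩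
  refine ⟨⟨fun (hex : IsExchangeable P) => ?_, ?_⟩, ?_⟩
  · obtain ⟨q1, q2, q3⟩ := hP.comp_of_surjective surjective_toCountVector
    exact ⟨_, ⟨q1, q2, q3⟩, fun f => (hex.apply_MuHy_countVec hP f).symm⟩
  · rintro ⟨Q, ⟨q1, q2, q3⟩, rep⟩ f π
    rw [rep]
    simp_rw [MuHy_comp_perm_sub_self]
    exact (IsCoherentLowerPrevision.map_zero ⟨q1, q2, q3⟩).ge
  · rintro Q - rep h
    rw [rep]
    congr 1
    funext m
    exact (MuHy_comp_toCountVector h m).symm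

/-- Representation theorem for finite exchangeable sequences: a coherent lower
prevision `P` on `L(X^N)` is exchangeable iff it is of the form `P f = Q (MuHy^N(f|·))` for
some coherent lower prevision `Q` on the gambles on the set of count vectors; moreover such a
`Q` is necessarily given by `Q h = P (h ∘ T^N)`. -/
theorem finite_representation_theorem
    {X : Type*} [Fintype X] [DecidableEq X] [Nonempty X] {N : ℕ} (hN : 1 ≤ N)
    (P : ((Fin N → X) → ℝ) → ℝ)
    (h1 : ∀ f : (Fin N → X) → ℝ, (⨅ z, f z) ≤ P f)
    (h2 : ∀ f : (Fin N → X) → ℝ, ∀ c : ℝ, 0 ≤ c → P (c • f) = c * P f)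
    (h3 : ∀ f g : (Fin N → X) → ℝ, P f + P g ≤ P (f + g)) :
    ((∀ (f : (Fin N → X) → ℝ) (π : Equiv.Perm (Fin N)),
        0 ≤ P (fun z => f (z ∘ π) - f z)) ↔
      (∃ Q : ({m : X → ℕ // ∑ x, m x = N} → ℝ) → ℝ,
        ((∀ h : {m : X → ℕ // ∑ x, m x = N} → ℝ, (⨅ m, h m) ≤ Q h) ∧
         (∀ h : {m : X → ℕ // ∑ x, m x = N} → ℝ, ∀ c : ℝ, 0 ≤ c → Q (c • h) = c * Q h) ∧
         (∀ h g : {m : X → ℕ // ∑ x, m x = N} → ℝ, Q h + Q g ≤ Q (h + g))) ∧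
        (∀ f : (Fin N → X) → ℝ, P f = Q (fun m => MuHy f m.val)))) ∧
    (∀ Q : ({m : X → ℕ // ∑ x, m x = N} → ℝ) → ℝ,
      ((∀ h : {m : X → ℕ // ∑ x, m x = N} → ℝ, (⨅ m, h m) ≤ Q h) ∧
       (∀ h : {m : X → ℕ // ∑ x, m x = N} → ℝ, ∀ c : ℝ, 0 ≤ c → Q (c • h) = c * Q h) ∧
       (∀ h g : {m : X → ℕ // ∑ x, m x = N} → ℝ, Q h + Q g ≤ Q (h + g))) →
      (∀ f : (Fin N → X) → ℝ, P f = Q (fun m => MuHy f m.val)) →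
      ∀ h : {m : X → ℕ // ∑ x, m x = N} → ℝ,
        Q h = P (fun z => h ⟨countVec z, sum_countVec z⟩)) :=
  finite_representation_theorem_general P h1 h2 h3
end

section
/- Degree elevation of Bernstein representations (Zhou's formula): if p = Σ_{m∈N^n} b(m)·B_m on Σ, then also p = Σ_{μ∈N^{n+k}} b'(μ)·B_μ, where b'(μ) = Σ_{m∈N^n, m≤μ} (ν(m)·ν(μ−m)/ν(μ))·b(m). -/
/-- The multinomial coefficient `ν(m) = (Σ_x m_x)! / ∏_x m_x!`. -/
def nu {X : Type*} [Fintype X] (m : X → ℕ) : ℕ :=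
  (∑ x, m x).factorial / ∏ x, (m x).factorial

/-- The set of count vectors `N^n = {m ∈ ℕ^X : Σ_x m_x = n}`, as a finset. -/
def NN (X : Type*) [Fintype X] [DecidableEq X] (n : ℕ) : Finset (X → ℕ) :=
  (Fintype.piFinset fun _ : X => Finset.range (n + 1)).filter fun m => ∑ x, m x = n

/-- The degree-`n` Bernstein basis polynomial `B_m(θ) = ν(m)·∏_x θ_x^{m_x}`. -/
noncomputable def bern {X : Type*} [Fintype X] (m : X → ℕ) (θ : X → ℝ) : ℝ :=
  (nu m : ℝ) * ∏ x, θ x ^ m x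

/-!
Multiplying `p = Σ_m b(m) B_m` by `1 = (Σ_x θ_x)^k = Σ_{r ∈ N^k} B_r` (multinomial theorem) and
using `B_m B_r = (ν(m) ν(r) / ν(m + r)) B_{m+r}` gives a double sum over pairs `(m, r)`;
regrouping it by `μ = m + r` yields the coefficients `b'(μ)`.
-/

open Finset

section

variable {X : Type*} [Fintype X]

lemma nu_pos (m : X → ℕ) : 0 < nu m := Nat.multinomial_pos _ _

lemma bern_mul_bern (m r : X → ℕ) (θ : X → ℝ) :
    bern m θ * bern r θ = (nu m * nu r / nu (m + r) : ℝ) * bern (m + r) θ := by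
  have hν : (nu (m + r) : ℝ) ≠ 0 := by exact_mod_cast (nu_pos (m + r)).ne'
  simp only [bern, Pi.add_apply, pow_add, prod_mul_distrib]
  field_simp

variable [DecidableEq X]

lemma mem_NN {n : ℕ} {m : X → ℕ} : m ∈ NN X n ↔ ∑ x, m x = n := by
  simp only [NN, mem_filter, Fintype.mem_piFinset, mem_range, Nat.lt_succ_iff,
    and_iff_right_iff_imp]
  rintro rfl x
  exact single_le_sum (fun i _ => Nat.zero_le (m i)) (mem_univ x)

lemma NN_eq_piAntidiag (n : ℕ) : NN X n = piAntidiag univ n := by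
  ext m
  simp [mem_NN, mem_piAntidiag]

lemma sum_bern_NN (k : ℕ) (θ : X → ℝ) : ∑ r ∈ NN X k, bern r θ = (∑ x, θ x) ^ k := by
  rw [sum_pow_eq_sum_piAntidiag, ← NN_eq_piAntidiag]
  rfl

lemma sum_bern_NN_of_sum_eq_one (k : ℕ) {θ : X → ℝ} (hθ1 : ∑ x, θ x = 1) :
    ∑ r ∈ NN X k, bern r θ = 1 := by
  rw [sum_bern_NN, hθ1, one_pow]

lemma sum_NN_add_eq_sum_filter_le {n : ℕ} {m : X → ℕ} (hm : m ∈ NN X n) (k : ℕ)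
    {M : Type*} [AddCommMonoid M] (g : (X → ℕ) → M) :
    ∑ r ∈ NN X k, g (m + r) = ∑ μ ∈ (NN X (n + k)).filter (fun μ => ∀ x, m x ≤ μ x), g μ := by
  rw [mem_NN] at hm
  refine sum_nbij' (m + ·) (· - m) ?_ ?_ ?_ ?_ (fun _ _ => rfl)
  · intro r hr
    rw [mem_NN] at hr
    simp [mem_NN, sum_add_distrib, hm, hr]
  · intro μ hμ
    obtain ⟨hμ, hle⟩ := mem_filter.1 hμ
    rw [mem_NN] at hμ ⊢
    simp only [Pi.sub_apply]
    rw [sum_tsub_distrib _ fun x _ => hle x, hμ, hm, Nat.add_sub_cancel_left]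
  · intro r _
    ext x
    simp
  · intro μ hμ
    ext x
    simp [Nat.add_sub_cancel' ((mem_filter.1 hμ).2 x)]

lemma sum_NN_sum_NN_eq_sum_NN_add (n k : ℕ) {M : Type*} [AddCommMonoid M]
    (g : (X → ℕ) → (X → ℕ) → M) :
    ∑ m ∈ NN X n, ∑ r ∈ NN X k, g m (m + r)
      = ∑ μ ∈ NN X (n + k), ∑ m ∈ (NN X n).filter (fun m => ∀ x, m x ≤ μ x), g m μ := by
  calc ∑ m ∈ NN X n, ∑ r ∈ NN X k, g m (m + r)
      = ∑ m ∈ NN X n, ∑ μ ∈ (NN X (n + k)).filter (fun μ => ∀ x, m x ≤ μ x), g m μ :=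
        sum_congr rfl fun m hm => sum_NN_add_eq_sum_filter_le hm k (g m)
    _ = _ := sum_comm' fun m μ => by simp only [mem_filter]; tauto

end

theorem bernstein_degree_elevation_general
    {X : Type*} [Fintype X] [DecidableEq X] (n k : ℕ)
    (b : (X → ℕ) → ℝ)
    (θ : X → ℝ) (hθ1 : ∑ x, θ x = 1) :
    ∑ m ∈ NN X n, b m * bern m θ
      = ∑ μ ∈ NN X (n + k),
          (∑ m ∈ (NN X n).filter fun m => ∀ x, m x ≤ μ x,
            ((nu m : ℝ) * nu (μ - m) / nu μ) * b m) * bern μ θ := by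
  let g : (X → ℕ) → (X → ℕ) → ℝ := fun m μ => ((nu m : ℝ) * nu (μ - m) / nu μ) * b m * bern μ θ
  calc ∑ m ∈ NN X n, b m * bern m θ
      = ∑ m ∈ NN X n, ∑ r ∈ NN X k, b m * (bern m θ * bern r θ) := by
        simp only [← mul_sum, sum_bern_NN_of_sum_eq_one k hθ1, mul_one]
    _ = ∑ m ∈ NN X n, ∑ r ∈ NN X k, g m (m + r) := by
        simp only [g, bern_mul_bern, add_tsub_cancel_left]
        refine sum_congr rfl fun m _ => sum_congr rfl fun r _ => by ring
    _ = _ := by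
        rw [sum_NN_sum_NN_eq_sum_NN_add]
        simp only [g, sum_mul]

/-- Degree elevation (Zhou's formula): if `p = Σ_{m∈N^n} b(m)·B_m` on the
simplex, then also `p = Σ_{μ∈N^{n+k}} b'(μ)·B_μ` with
`b'(μ) = Σ_{m∈N^n, m≤μ} (ν(m)·ν(μ−m)/ν(μ))·b(m)`. -/
theorem bernstein_degree_elevation
    {X : Type*} [Fintype X] [DecidableEq X] [Nonempty X] (n k : ℕ)
    (b : (X → ℕ) → ℝ)
    (θ : X → ℝ) (hθ0 : ∀ x, 0 ≤ θ x) (hθ1 : ∑ x, θ x = 1) :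
    ∑ m ∈ NN X n, b m * bern m θ
      = ∑ μ ∈ NN X (n + k),
          (∑ m ∈ (NN X n).filter fun m => ∀ x, m x ≤ μ x,
            ((nu m : ℝ) * nu (μ - m) / nu μ) * b m) * bern μ θ :=
  bernstein_degree_elevation_general n k b θ hθ1
end
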